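/- Full activation identity: Under the hypotheses of the reciprocity lemma, if ∫_Ω c̃(x) ∇γ(x−z)·(η × ∇γ(x−y)) dx = 0 holds for all z in a neighborhood of y in ℝ³∖Ω̄, then for every e ∈ S², ∫_Ω c̃(x) ((x−y)/|x−y|⁶) · (η × e) dx = 0. -/

import Mathlib

open Real MeasureTheory Filter

noncomputable def fundSol : EuclideanSpace ℝ (Fin 3) → ℝ := fun x => 1 / (4 * π * ‖x‖)

/-- The cross product on `ℝ³`. -/
noncomputable def cross3 (a b : EuclideanSpace ℝ (Fin 3)) : EuclideanSpace ℝ (Fin 3) :=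
  (WithLp.equiv 2 (Fin 3 → ℝ)).symm
    ![a 1 * b 2 - a 2 * b 1, a 2 * b 0 - a 0 * b 2, a 0 * b 1 - a 1 * b 0]

/-!
With `z = y - ε e` and `w = η × e`, orthogonality of `x - y` to `η × (x - y)` turns the hypothesis
into `ε G(z) = 0`, where `G(z) = ∫_Ω c̃(x) ⟪x - y, w⟫ |x - y|⁻³ |x - z|⁻³ dx`. Hence `G` vanishes on
`y - ε e` for small `ε > 0`. Since `y` has positive distance to `Ω`, dominated convergence makes `G`
continuous at `y`, so `G(y) = 0`, which is the claim.
-/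

open Topology

theorem hasGradientAt_inv_norm {F : Type*} [NormedAddCommGroup F] [InnerProductSpace ℝ F]
    [CompleteSpace F] {v : F} (hv : v ≠ 0) :
    HasGradientAt (fun x : F => ‖x‖⁻¹) (-(‖v‖ ^ 3)⁻¹ • v) v := by
  have hsqrt : HasDerivAt (fun t : ℝ => (√t)⁻¹)
      (-(1 / (2 * √(‖v‖ ^ 2))) / √(‖v‖ ^ 2) ^ 2) (‖v‖ ^ 2) :=
    (Real.hasDerivAt_sqrt (by positivity)).inv (by positivity)
  have h := hsqrt.comp_hasFDerivAt v (hasStrictFDerivAt_norm_sq v).hasFDerivAt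
  simp only [Function.comp_def, Real.sqrt_sq (norm_nonneg _)] at h
  rw [hasGradientAt_iff_hasFDerivAt]
  refine h.congr_fderiv ?_
  ext u
  simp only [one_div, mul_inv_rev, smul_apply, coe_innerSL_apply, nsmul_eq_mul, Nat.cast_ofNat,
    smul_eq_mul, neg_smul, map_neg, map_smul, neg_apply, InnerProductSpace.toDual_apply_apply]
  field_simp

theorem gradient_fundSol {v : EuclideanSpace ℝ (Fin 3)} (hv : v ≠ 0) :
    gradient fundSol v = -(4 * π * ‖v‖ ^ 3)⁻¹ • v := by
  have hfundSol : fundSol = fun x => (4 * π)⁻¹ * ‖x‖⁻¹ := by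
    funext x
    simp [fundSol, mul_comm]
  have h : HasGradientAt fundSol ((4 * π)⁻¹ • -(‖v‖ ^ 3)⁻¹ • v) v := by
    rw [hasGradientAt_iff_hasFDerivAt, map_smul, hfundSol]
    exact (hasGradientAt_inv_norm hv).hasFDerivAt.const_mul _
  rw [h.gradient, smul_smul, mul_neg, ← mul_inv]

theorem inner_smul_add_smul_cross3_smul_self (v e η : EuclideanSpace ℝ (Fin 3)) (a b ε : ℝ) :
    inner ℝ (a • (v + ε • e)) (cross3 η (b • v)) = -(a * b * ε) * inner ℝ v (cross3 η e) := by
  simp only [cross3, smul_add, PiLp.smul_apply, smul_eq_mul, WithLp.equiv_symm_apply,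
    PiLp.inner_apply, PiLp.add_apply, RCLike.inner_apply, ringHom_apply, Fin.sum_univ_three,
    Matrix.cons_val_zero, Matrix.cons_val_one, Matrix.cons_val]
  ring

theorem inner_gradient_fundSol_add_smul_cross3 {v e η : EuclideanSpace ℝ (Fin 3)} {ε : ℝ}
    (hv : v ≠ 0) (hvε : v + ε • e ≠ 0) :
    inner ℝ (gradient fundSol (v + ε • e)) (cross3 η (gradient fundSol v)) =
      -(ε / (16 * π ^ 2)) * (inner ℝ v (cross3 η e) * (‖v‖ ^ 3)⁻¹ * (‖v + ε • e‖ ^ 3)⁻¹) := by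
  rw [gradient_fundSol hv, gradient_fundSol hvε, inner_smul_add_smul_cross3_smul_self]
  field_simp
  ring

section Kernel

variable {E : Type*} [NormedAddCommGroup E] {s : Set E} {y : E}

theorem exists_pos_le_norm_sub_of_notMem_closure (hy : y ∉ closure s) :
    ∃ r > 0, ∀ x ∈ s, ∀ z ∈ Metric.ball y r, r ≤ ‖x - z‖ := by
  obtain ⟨r, hr, hball⟩ := Metric.isOpen_iff.mp isClosed_closure.isOpen_compl y hy
  refine ⟨r / 2, half_pos hr, fun x hx z hz => ?_⟩
  have hxy : r ≤ dist x y := by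
    by_contra! h
    exact hball (Metric.mem_ball.mpr h) (subset_closure hx)
  have := dist_triangle x z y
  rw [Metric.mem_ball] at hz
  rw [← dist_eq_norm]
  linarith

variable [MeasurableSpace E] [OpensMeasurableSpace E] {μ : Measure E} {g : E → ℝ}

theorem integrableOn_mul_inner_sub_mul_inv_norm_sub [InnerProductSpace ℝ E]
    (hg : IntegrableOn g s μ) (y w : E) :
    IntegrableOn (fun x => g x * (inner ℝ (x - y) w * ‖x - y‖⁻¹)) s μ := by
  refine hg.mul_bdd (c := ‖w‖) ?_ (ae_of_all _ fun x => ?_)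
  · exact ((continuous_id.sub continuous_const).inner continuous_const).measurable.mul
      (continuous_id.sub continuous_const).norm.measurable.inv |>.aestronglyMeasurable
  · rw [norm_mul, norm_inv, norm_norm]
    rcases eq_or_ne (x - y) 0 with h | h
    · simp [h]
    · rw [← div_eq_mul_inv, div_le_iff₀ (norm_pos_iff.mpr h), mul_comm]
      exact norm_inner_le_norm _ _

theorem integrableOn_mul_inv_norm_sub_pow (hs : MeasurableSet s) (hg : IntegrableOn g s μ)
    (hy : y ∉ closure s) (n : ℕ) :
    IntegrableOn (fun x => g x * (‖x - y‖ ^ n)⁻¹) s μ := by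
  obtain ⟨r, hr, hfar⟩ := exists_pos_le_norm_sub_of_notMem_closure hy
  refine hg.mul_bdd (c := (r ^ n)⁻¹) ?_ ?_
  · exact (continuous_id.sub continuous_const).norm.pow n |>.measurable.inv.aestronglyMeasurable
  · filter_upwards [ae_restrict_mem hs] with x hx
    have := hfar x hx y (Metric.mem_ball_self hr)
    rw [norm_inv, norm_pow, norm_norm]
    gcongr

theorem continuousAt_setIntegral_mul_inv_norm_sub_pow (hs : MeasurableSet s)
    (hg : IntegrableOn g s μ) (hy : y ∉ closure s) (n : ℕ) :
    ContinuousAt (fun z => ∫ x in s, g x * (‖x - z‖ ^ n)⁻¹ ∂μ) y := by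
  obtain ⟨r, hr, hfar⟩ := exists_pos_le_norm_sub_of_notMem_closure hy
  refine continuousAt_of_dominated (bound := fun x => |g x| * (r ^ n)⁻¹) ?_ ?_
    (hg.abs.mul_const _) ?_
  · refine Eventually.of_forall fun z => hg.aestronglyMeasurable.mul ?_
    exact (continuous_id.sub continuous_const).norm.pow n |>.measurable.inv.aestronglyMeasurable
  · filter_upwards [Metric.ball_mem_nhds y hr] with z hz
    filter_upwards [ae_restrict_mem hs] with x hx
    have := hfar x hx z hz
    rw [norm_mul, Real.norm_eq_abs, norm_inv, norm_pow, norm_norm]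
    gcongr
  · filter_upwards [ae_restrict_mem hs] with x hx
    have hxy : ‖x - y‖ ^ n ≠ 0 :=
      (pow_pos (hr.trans_le (hfar x hx y (Metric.mem_ball_self hr))) n).ne'
    exact continuousAt_const.mul
      (((continuous_const.sub continuous_id).norm.pow n).continuousAt.inv₀ hxy)

end Kernel

theorem setIntegral_inner_gradient_fundSol_cross3_eq {Ω : Set (EuclideanSpace ℝ (Fin 3))}
    (hΩ : MeasurableSet Ω) (c : EuclideanSpace ℝ (Fin 3) → ℝ) {y : EuclideanSpace ℝ (Fin 3)}
    (η e : EuclideanSpace ℝ (Fin 3)) {ε : ℝ} (hy : y ∉ Ω) (hyε : y - ε • e ∉ Ω) :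
    ∫ x in Ω, c x * inner ℝ (gradient fundSol (x - (y - ε • e)))
        (cross3 η (gradient fundSol (x - y))) =
      -(ε / (16 * π ^ 2)) * ∫ x in Ω, c x * (inner ℝ (x - y) (cross3 η e) * ‖x - y‖⁻¹) *
        (‖x - y‖ ^ 2)⁻¹ * (‖x - (y - ε • e)‖ ^ 3)⁻¹ := by
  rw [← integral_const_mul]
  refine setIntegral_congr_fun hΩ fun x hx => ?_
  have hxy : x - y ≠ 0 := sub_ne_zero.mpr (ne_of_mem_of_not_mem hx hy)
  have hxz : x - (y - ε • e) ≠ 0 := sub_ne_zero.mpr (ne_of_mem_of_not_mem hx hyε)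
  rw [sub_sub_eq_add_sub, add_sub_right_comm] at hxz ⊢
  rw [inner_gradient_fundSol_add_smul_cross3 hxy hxz]
  ring

theorem stmt13_general (Ω : Set (EuclideanSpace ℝ (Fin 3))) (hΩo : IsOpen Ω)
    (ctil : EuclideanSpace ℝ (Fin 3) → ℝ) (hci : IntegrableOn ctil Ω)
    (y : EuclideanSpace ℝ (Fin 3)) (hy : y ∉ closure Ω) (η : EuclideanSpace ℝ (Fin 3))
    (hzero : ∀ᶠ z in nhds y,
      ∫ x in Ω, ctil x *
        (inner ℝ (gradient fundSol (x - z)) (cross3 η (gradient fundSol (x - y))) : ℝ) = 0) :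
    ∀ e : EuclideanSpace ℝ (Fin 3), ‖e‖ = 1 →
      ∫ x in Ω, ctil x * (inner ℝ ((‖x - y‖ ^ 6)⁻¹ • (x - y)) (cross3 η e) : ℝ) = 0 := by
  intro e _
  -- `|x - y|⁻³` is split so that `integrableOn_mul_inner_sub_mul_inv_norm_sub` applies
  set G : EuclideanSpace ℝ (Fin 3) → ℝ := fun z => ∫ x in Ω, ctil x *
    (inner ℝ (x - y) (cross3 η e) * ‖x - y‖⁻¹) * (‖x - y‖ ^ 2)⁻¹ * (‖x - z‖ ^ 3)⁻¹
  have hG : ContinuousAt G y :=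
    continuousAt_setIntegral_mul_inv_norm_sub_pow hΩo.measurableSet
      (integrableOn_mul_inv_norm_sub_pow hΩo.measurableSet
        (integrableOn_mul_inner_sub_mul_inv_norm_sub hci y _) hy 2) hy 3
  have hshift : Tendsto (fun ε : ℝ => y - ε • e) (𝓝[>] 0) (𝓝 y) :=
    tendsto_nhdsWithin_of_tendsto_nhds ((by fun_prop : Continuous fun ε : ℝ => y - ε • e)
      |>.tendsto' 0 y (by simp))
  have hG_shift : (fun ε : ℝ => G (y - ε • e)) =ᶠ[𝓝[>] 0] fun _ => 0 := by
    filter_upwards [hshift.eventually hzero,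
      hshift.eventually (isClosed_closure.isOpen_compl.mem_nhds hy), self_mem_nhdsWithin]
      with ε hε hεΩ hpos
    rw [setIntegral_inner_gradient_fundSol_cross3_eq hΩo.measurableSet ctil η e
      (fun h => hy (subset_closure h)) (fun h => hεΩ (subset_closure h))] at hε
    exact (mul_eq_zero.mp hε).resolve_left (by simp [(Set.mem_Ioi.mp hpos).ne', pi_ne_zero])
  have hGy : G y = 0 :=
    tendsto_nhds_unique (hG.tendsto.comp hshift) (tendsto_const_nhds.congr' hG_shift.symm)
  refine (integral_congr_ae (ae_of_all _ fun x => ?_)).trans hGy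
  simp only [real_inner_smul_left]
  ring

/-- Full activation identity: if `∫_Ω c̃(x) ∇γ(x−z)·(η × ∇γ(x−y)) dx = 0` for all `z`
in a neighborhood of `y ∈ ℝ³∖Ω̄`, then for every unit vector `e`,
`∫_Ω c̃(x) ((x−y)/|x−y|⁶)·(η × e) dx = 0`. -/
theorem stmt13 (Ω : Set (EuclideanSpace ℝ (Fin 3))) (hΩo : IsOpen Ω)
    (hΩc : IsConnected Ω) (hΩb : Bornology.IsBounded Ω)
    (ctil : EuclideanSpace ℝ (Fin 3) → ℝ) (hci : IntegrableOn ctil Ω)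
    (hcs : HasCompactSupport ctil) (hcΩ : tsupport ctil ⊆ Ω)
    (y : EuclideanSpace ℝ (Fin 3)) (hy : y ∉ closure Ω) (η : EuclideanSpace ℝ (Fin 3))
    (hzero : ∀ᶠ z in nhds y,
      ∫ x in Ω, ctil x *
        (inner ℝ (gradient fundSol (x - z)) (cross3 η (gradient fundSol (x - y))) : ℝ) = 0) :
    ∀ e : EuclideanSpace ℝ (Fin 3), ‖e‖ = 1 →
      ∫ x in Ω, ctil x * (inner ℝ ((‖x - y‖ ^ 6)⁻¹ • (x - y)) (cross3 η e) : ℝ) = 0 :=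
  stmt13_general Ω hΩo ctil hci y hy η hzero
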